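/- arXiv:1210.8227 — 4 statements merged into one kernel-verified Lean document; each statement's English description precedes it below -/
import Mathlib

section
/- For bounded operators U_0 and V on a Hilbert space and natural numbers n ≤ k, the n-th derivative in t of (U_0 + tV)^k equals n! times the sum over all tuples (k_0, k_1, ..., k_n) of nonnegative integers with k_0 + k_1 + ... + k_n = k - n of the operators U_t^{k_0} V U_t^{k_1} V ... V U_t^{k_n}, where U_t = U_0 + tV. If n > k, the n-th derivative is zero. -/
/-!
Substituting `s = t + h`, the power `(U_t + h V)^k` expands into a polynomial in `h` whose
coefficient of `h^m` is the sum `W_m` of all words with `m` letters `V` and `k - m` letters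
`U_t`: split a word according to its first letter. The `n`-th derivative at `h = 0` of this
polynomial is `n! W_n`, and `0` when `n > k`.
-/

noncomputable section

variable {H : Type*} [NormedAddCommGroup H] [InnerProductSpace ℂ H] [CompleteSpace H]

open Finset
open scoped Nat

theorem Finset.Nat.sum_antidiagonalTuple_succ {M : Type*} [AddCommMonoid M] (k n : ℕ)
    (f : (Fin (k + 1) → ℕ) → M) :
    ∑ x ∈ Nat.antidiagonalTuple (k + 1) n, f x =
      ∑ p ∈ antidiagonal n, ∑ x ∈ Nat.antidiagonalTuple k p.2, f (Fin.cons p.1 x) := by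
  rw [sum_sigma']
  symm
  refine sum_bij (fun q _ => Fin.cons q.1.1 q.2) ?_ ?_ ?_ fun _ _ => rfl
  · rintro ⟨⟨a, b⟩, x⟩ h
    simp_all [Nat.mem_antidiagonalTuple, Fin.sum_cons]
  · rintro ⟨⟨a, b⟩, x⟩ h ⟨⟨a', b'⟩, x'⟩ h' he
    simp_all [Fin.cons_inj]
    omega
  · intro x hx
    refine ⟨⟨(x 0, ∑ i : Fin k, x i.succ), Fin.tail x⟩, ?_, Fin.cons_self_tail x⟩
    simp_all [Nat.mem_antidiagonalTuple, Fin.sum_univ_succ, Fin.tail]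

section MixedWordSum

variable {R : Type*} [Semiring R] (A V : R)

/-- The sum of all products of `m` factors `V` and `d` factors `A`, the word
`A ^ κ₀ * V * A ^ κ₁ * ⋯ * V * A ^ κₘ` being indexed by its exponents `κ`. -/
def mixedWordSum (m d : ℕ) : R :=
  ∑ κ ∈ Nat.antidiagonalTuple (m + 1) d,
    (List.ofFn fun i : Fin m => A ^ κ i.castSucc * V).prod * A ^ κ (Fin.last m)

theorem mixedWordSum_zero_left (d : ℕ) : mixedWordSum A V 0 d = A ^ d := by
  simp [mixedWordSum, Nat.antidiagonalTuple_one]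

theorem mixedWordSum_succ_left (m d : ℕ) :
    mixedWordSum A V (m + 1) d =
      ∑ p ∈ antidiagonal d, A ^ p.1 * V * mixedWordSum A V m p.2 := by
  simp only [mixedWordSum, Nat.sum_antidiagonalTuple_succ, mul_sum]
  refine sum_congr rfl fun p _ => sum_congr rfl fun κ _ => ?_
  simp [List.ofFn_succ, ← Fin.succ_last, mul_assoc]

theorem mixedWordSum_succ_zero (m : ℕ) :
    mixedWordSum A V (m + 1) 0 = V * mixedWordSum A V m 0 := by
  simp [mixedWordSum_succ_left]

theorem mixedWordSum_succ_succ (m d : ℕ) :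
    mixedWordSum A V (m + 1) (d + 1) =
      A * mixedWordSum A V (m + 1) d + V * mixedWordSum A V m (d + 1) := by
  rw [mixedWordSum_succ_left, Nat.sum_antidiagonal_succ, mixedWordSum_succ_left, mul_sum, add_comm]
  simp [pow_succ', mul_assoc]

theorem add_smul_pow_eq_sum_mixedWordSum {𝕜 : Type*} [CommSemiring 𝕜] [Algebra 𝕜 R]
    (r : 𝕜) (k : ℕ) :
    (A + r • V) ^ k = ∑ p ∈ antidiagonal k, r ^ p.1 • mixedWordSum A V p.1 p.2 := by
  induction k with
  | zero => simp [mixedWordSum_zero_left]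
  | succ k ih =>
    have hA : A * ∑ p ∈ antidiagonal k, r ^ p.1 • mixedWordSum A V p.1 p.2 =
        ∑ p ∈ antidiagonal (k + 1),
          r ^ p.1 • if p.2 = 0 then 0 else A * mixedWordSum A V p.1 (p.2 - 1) := by
      simp [Nat.sum_antidiagonal_succ', mul_sum]
    have hV : r • V * ∑ p ∈ antidiagonal k, r ^ p.1 • mixedWordSum A V p.1 p.2 =
        ∑ p ∈ antidiagonal (k + 1),
          r ^ p.1 • if p.1 = 0 then 0 else V * mixedWordSum A V (p.1 - 1) p.2 := by
      simp [Nat.sum_antidiagonal_succ, mul_sum, smul_smul, pow_succ]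
    rw [pow_succ', ih, add_mul, hA, hV, ← sum_add_distrib]
    refine sum_congr rfl fun ⟨m, d⟩ hmd => ?_
    rw [← smul_add]
    congr 1
    rcases m with _ | m <;> rcases d with _ | d
    · simp at hmd
    · simp [mixedWordSum_zero_left, pow_succ']
    · simp [mixedWordSum_succ_zero]
    · simp [mixedWordSum_succ_succ]

end MixedWordSum

theorem iteratedDeriv_sum_range_pow_smul_zero {𝕜 E : Type*} [NontriviallyNormedField 𝕜]
    [NormedAddCommGroup E] [NormedSpace 𝕜 E] (c : ℕ → E) (K n : ℕ) :
    iteratedDeriv n (fun x : 𝕜 => ∑ m ∈ range K, x ^ m • c m) 0 =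
      if n < K then (n ! : 𝕜) • c n else 0 := by
  rw [iteratedDeriv_fun_sum fun m _ => by fun_prop]
  calc ∑ m ∈ range K, iteratedDeriv n (fun x : 𝕜 => x ^ m • c m) 0
      = ∑ m ∈ range K, ((if n = m then m ! else 0 : ℕ) : 𝕜) • c m :=
        sum_congr rfl fun m _ => by
          rw [iteratedDeriv_smul_const (by fun_prop), iteratedDeriv_fun_pow_zero]
    _ = if n < K then (n ! : 𝕜) • c n else 0 := by simp [ite_smul]

/-- Lemma 2.2 of the paper: for bounded operators `U₀, V` on a Hilbert space and `n ≤ k`,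
the `n`-th derivative in `t` of `(U₀ + tV)^k` equals `n!` times the sum over all tuples
`(k_0, …, k_n)` of nonnegative integers with `k_0 + ⋯ + k_n = k − n` of
`U_t^{k_0} V U_t^{k_1} V ⋯ V U_t^{k_n}` (with `U_t = U₀ + tV`), and it is `0` when `n > k`. -/
theorem iteratedDeriv_operator_pow (U₀ V : H →L[ℂ] H) (n k : ℕ) (t : ℝ) :
    (n ≤ k →
      iteratedDeriv n (fun s : ℝ => (U₀ + s • V) ^ k) t
        = (n.factorial : ℂ) •
            ∑ kappa ∈ Finset.Nat.antidiagonalTuple (n + 1) (k - n),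
              (List.ofFn fun i : Fin n =>
                  (U₀ + t • V) ^ kappa i.castSucc * V).prod
                * (U₀ + t • V) ^ kappa (Fin.last n))
    ∧ (k < n → iteratedDeriv n (fun s : ℝ => (U₀ + s • V) ^ k) t = 0) := by
  set U := U₀ + t • V
  have hshift : (fun s : ℝ => (U₀ + s • V) ^ k) = fun s => (U + (s - t) • V) ^ k := by
    funext s
    rw [sub_smul, add_add_sub_cancel]
  have hderiv : iteratedDeriv n (fun s : ℝ => (U₀ + s • V) ^ k) t =
      if n < k + 1 then (n ! : ℝ) • mixedWordSum U V n (k - n) else 0 := by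
    rw [hshift, iteratedDeriv_comp_sub_const n (fun h : ℝ => (U + h • V) ^ k) t]
    simp only [sub_self, add_smul_pow_eq_sum_mixedWordSum,
      Nat.sum_antidiagonal_eq_sum_range_succ_mk]
    exact iteratedDeriv_sum_range_pow_smul_zero _ _ _
  refine ⟨fun hnk => ?_, fun hkn => ?_⟩
  · rw [hderiv, if_pos (by omega), Nat.cast_smul_eq_nsmul, Nat.cast_smul_eq_nsmul]
    rfl
  · rw [hderiv, if_neg (by omega)]
end
end

section
/- Let m ≥ 0 be an integer, λ, ξ, μ complex numbers with λ ≠ μ, and h a polynomial. Define φ_{h,m}(λ,μ) := ∫_0^1 t^m h(λ + (μ−λ)t) dt. Then φ_{h,m}(λ,μ) = ((ξ−λ)/(μ−λ))^{m+1} φ_{h,m}(λ,ξ) + ((μ−ξ)/(μ−λ))^{m+1} φ_{h,m}(ξ,μ) + Σ_{k=0}^{m−1} C(m,k) ((μ−ξ)/(μ−λ))^{k+1} ((ξ−λ)/(μ−λ))^{m−k} φ_{h,k}(ξ,μ), where the last sum is absent when m = 0. -/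
open MeasureTheory Polynomial
noncomputable section

/-!
`(μ−λ)^{m+1} φ_{h,m}(λ,μ)` is the integral `∫_λ^μ (z−λ)^m h(z) dz` along the segment from `λ`
to `μ`. A polynomial has a polynomial primitive, so this integral splits at `ξ` into
`∫_λ^ξ + ∫_ξ^μ`. The first piece is `(ξ−λ)^{m+1} φ_{h,m}(λ,ξ)`; expanding
`(z−λ)^m = ((z−ξ) + (ξ−λ))^m` binomially turns the second into
`∑_{k ≤ m} C(m,k) (ξ−λ)^{m−k} (μ−ξ)^{k+1} φ_{h,k}(ξ,μ)`. Dividing by `(μ−λ)^{m+1}` gives the claim.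
-/

/-- `φ_{h,m}(λ,μ) = ∫_0^1 t^m h(λ + (μ−λ)t) dt` for a complex polynomial `h`. -/
def phiHM (h : Polynomial ℂ) (m : ℕ) (lam mu : ℂ) : ℂ :=
  ∫ t in (0:ℝ)..1, ((t : ℂ)) ^ m * h.eval (lam + (mu - lam) * (t : ℂ))

def segmentIntegral (f : ℂ → ℂ) (u v : ℂ) : ℂ :=
  ∫ t in (0:ℝ)..1, (v - u) * f (u + (v - u) * t)

theorem Polynomial.derivative_surjective {K : Type*} [Field K] [CharZero K] :
    Function.Surjective (derivative : K[X] → K[X]) := by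
  intro p
  induction p using Polynomial.induction_on' with
  | add p q hp hq =>
    obtain ⟨P, rfl⟩ := hp
    obtain ⟨Q, rfl⟩ := hq
    exact ⟨P + Q, derivative_add⟩
  | monomial n c =>
    refine ⟨monomial (n + 1) (c / (n + 1)), ?_⟩
    rw [derivative_monomial, Nat.add_sub_cancel]
    congr 1
    push_cast
    field_simp

theorem segmentIntegral_derivative_eval (q : ℂ[X]) (u v : ℂ) :
    segmentIntegral (derivative q).eval u v = q.eval v - q.eval u := by
  have hderiv (t : ℝ) : HasDerivAt (fun t : ℝ => q.eval (u + (v - u) * t))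
      ((v - u) * (derivative q).eval (u + (v - u) * t)) t := by
    have := ((q.hasDerivAt _).comp (t : ℂ)
      (((hasDerivAt_id (t : ℂ)).const_mul (v - u)).const_add u)).comp_ofReal
    simpa [mul_comm] using this
  rw [segmentIntegral, intervalIntegral.integral_eq_sub_of_hasDerivAt (fun t _ => hderiv t)
    (Continuous.intervalIntegrable (by fun_prop) _ _)]
  simp

theorem segmentIntegral_add_segmentIntegral (p : ℂ[X]) (u v w : ℂ) :
    segmentIntegral p.eval u v + segmentIntegral p.eval v w = segmentIntegral p.eval u w := by
  obtain ⟨q, rfl⟩ := derivative_surjective p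
  simp only [segmentIntegral_derivative_eval]
  ring

theorem sub_pow_succ_mul_phiHM (h : ℂ[X]) (m : ℕ) (u v : ℂ) :
    (v - u) ^ (m + 1) * phiHM h m u v = segmentIntegral (fun z => (z - u) ^ m * h.eval z) u v := by
  rw [phiHM, segmentIntegral, ← intervalIntegral.integral_const_mul]
  congr 1 with t
  rw [add_sub_cancel_left, mul_pow]
  ring

theorem segmentIntegral_sub_pow_mul_eval (h : ℂ[X]) (m : ℕ) (c u v : ℂ) :
    segmentIntegral (fun z => (z - c) ^ m * h.eval z) u v
      = ∑ k ∈ Finset.range (m + 1),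
          (m.choose k : ℂ) * (u - c) ^ (m - k) * ((v - u) ^ (k + 1) * phiHM h k u v) := by
  simp only [phiHM, ← intervalIntegral.integral_const_mul]
  rw [segmentIntegral, ← intervalIntegral.integral_finsetSum
    (fun k _ => Continuous.intervalIntegrable (by fun_prop) _ _)]
  congr 1 with t
  rw [show u + (v - u) * t - c = (v - u) * t + (u - c) by ring, add_pow, Finset.sum_mul,
    Finset.mul_sum]
  refine Finset.sum_congr rfl fun k _ => ?_
  rw [mul_pow]
  ring

/-- Decomposition of `φ_{h,m}` (Lemma 2.11): for `λ ≠ μ` and any `ξ`,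
`φ_{h,m}(λ,μ)` splits into contributions along `[λ,ξ]` and `[ξ,μ]`. -/
theorem phiHM_decomposition (m : ℕ) (h : Polynomial ℂ) (lam xi mu : ℂ) (hne : lam ≠ mu) :
    phiHM h m lam mu =
      ((xi - lam) / (mu - lam)) ^ (m + 1) * phiHM h m lam xi
        + ((mu - xi) / (mu - lam)) ^ (m + 1) * phiHM h m xi mu
        + ∑ k ∈ Finset.range m,
            (m.choose k : ℂ) * ((mu - xi) / (mu - lam)) ^ (k + 1)
              * ((xi - lam) / (mu - lam)) ^ (m - k) * phiHM h k xi mu := by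
  have hd : mu - lam ≠ 0 := sub_ne_zero.mpr hne.symm
  have scaled : (mu - lam) ^ (m + 1) * phiHM h m lam mu
      = (xi - lam) ^ (m + 1) * phiHM h m lam xi
        + ∑ k ∈ Finset.range (m + 1),
            (m.choose k : ℂ) * (xi - lam) ^ (m - k) * ((mu - xi) ^ (k + 1) * phiHM h k xi mu) := by
    have additivity := segmentIntegral_add_segmentIntegral ((X - C lam) ^ m * h) lam xi mu
    simp only [eval_mul, eval_pow, eval_sub, eval_X, eval_C] at additivity
    rw [sub_pow_succ_mul_phiHM, sub_pow_succ_mul_phiHM, ← additivity,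
      segmentIntegral_sub_pow_mul_eval h m lam xi mu]
  have normalize_term : ∀ k ∈ Finset.range m, (m.choose k : ℂ) * ((mu - xi) / (mu - lam)) ^ (k + 1)
      * ((xi - lam) / (mu - lam)) ^ (m - k) * phiHM h k xi mu
      = (m.choose k : ℂ) * (xi - lam) ^ (m - k) * ((mu - xi) ^ (k + 1) * phiHM h k xi mu)
        / (mu - lam) ^ (m + 1) := by
    intro k hk
    obtain ⟨j, rfl⟩ := Nat.exists_eq_add_of_le (Finset.mem_range.mp hk).le
    rw [Nat.add_sub_cancel_left, div_pow, div_pow, add_right_comm k j 1,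
      pow_add (mu - lam) (k + 1) j]
    field_simp
  rw [Finset.sum_congr rfl normalize_term, ← Finset.sum_div, div_pow, div_pow]
  rw [Finset.sum_range_succ, Nat.choose_self, Nat.sub_self] at scaled
  generalize (∑ k ∈ Finset.range m, _ : ℂ) = S at scaled ⊢
  field_simp
  linear_combination scaled
end
end

section
/- Let m ≥ 1 be an integer, κ ∈ (0,1], λ, ξ, μ complex numbers with λ ≠ μ, and h a polynomial. Then ∫_0^κ ∫_0^t t^{m−1} h(κξ + (μ−ξ)t + (λ−μ)s) ds dt = (1/m)((ξ−λ)/(μ−λ)) ∫_0^κ (κ^m − t^m) h(κξ + (λ−ξ)t) dt + (1/m)((μ−ξ)/(μ−λ)) ∫_0^κ (κ^m − t^m) h(κξ + (μ−ξ)t) dt. -/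
/-!
The identity holds for every entire `h`, which has a primitive `F` on `ℂ`. Integrating in `s`
first, the inner integral is a difference of values of `F` along the two edges `κξ + (λ - ξ)t`
and `κξ + (μ - ξ)t`, divided by `λ - μ`. On each edge, integrating `t^{m-1} F(b + ct)` by parts
against `t^m - κ^m` (chosen to vanish at `t = κ`) turns it into
`(c ∫ (κ^m - t^m) h(b + ct) dt + κ^m F(b)) / m`; the boundary terms `κ^m F(κξ)` cancel in the
difference.
-/

open MeasureTheory

section Primitive

variable {f F : ℂ → ℂ}

theorem hasDerivAt_comp_ofReal_affine (hF : ∀ z, HasDerivAt F (f z) z) (a c : ℂ) (t : ℝ) :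
    HasDerivAt (fun t : ℝ => F (a + c * t)) (c * f (a + c * t)) t := by
  have hlin : HasDerivAt (fun z : ℂ => a + c * z) c t := by
    simpa using ((hasDerivAt_id (t : ℂ)).const_mul c).const_add a
  exact (((hF _).comp (t : ℂ) hlin).congr_deriv (mul_comm _ _)).comp_ofReal

theorem integral_mul_comp_affine_eq_sub (hF : ∀ z, HasDerivAt F (f z) z) (hf : Continuous f)
    (a c : ℂ) (u v : ℝ) :
    ∫ s in u..v, c * f (a + c * s) = F (a + c * v) - F (a + c * u) :=
  intervalIntegral.integral_eq_sub_of_hasDerivAt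
    (fun t _ => hasDerivAt_comp_ofReal_affine hF a c t)
    ((by fun_prop : Continuous _).intervalIntegrable _ _)

theorem natCast_mul_integral_pow_mul_comp_affine (hF : ∀ z, HasDerivAt F (f z) z)
    (hf : Continuous f) {m : ℕ} (hm : m ≠ 0) (kappa : ℝ) (b c : ℂ) :
    (m : ℂ) * ∫ t in (0:ℝ)..kappa, (t : ℂ) ^ (m - 1) * F (b + c * t)
      = c * (∫ t in (0:ℝ)..kappa, ((kappa : ℂ) ^ m - (t : ℂ) ^ m) * f (b + c * t))
        + (kappa : ℂ) ^ m * F b := by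
  have hFc : Continuous F := continuous_iff_continuousAt.2 fun z => (hF z).continuousAt
  have parts := intervalIntegral.integral_mul_deriv_eq_deriv_mul (a := 0) (b := kappa)
    (u := fun t : ℝ => (t : ℂ) ^ m - (kappa : ℂ) ^ m) (v := fun t : ℝ => F (b + c * t))
    (fun t _ => ((hasDerivAt_pow m (t : ℂ)).comp_ofReal).sub_const _)
    (fun t _ => hasDerivAt_comp_ofReal_affine hF b c t)
    ((by fun_prop : Continuous _).intervalIntegrable _ _)
    ((by fun_prop : Continuous _).intervalIntegrable _ _)
  have hlhs : ∫ t in (0:ℝ)..kappa, ((t : ℂ) ^ m - (kappa : ℂ) ^ m) * (c * f (b + c * t))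
      = -(c * ∫ t in (0:ℝ)..kappa, ((kappa : ℂ) ^ m - (t : ℂ) ^ m) * f (b + c * t)) := by
    rw [← intervalIntegral.integral_const_mul, ← intervalIntegral.integral_neg]
    congr 1 with t
    ring
  have hrhs : ∫ t in (0:ℝ)..kappa, (m : ℂ) * (t : ℂ) ^ (m - 1) * F (b + c * t)
      = (m : ℂ) * ∫ t in (0:ℝ)..kappa, (t : ℂ) ^ (m - 1) * F (b + c * t) := by
    simp only [mul_assoc, intervalIntegral.integral_const_mul]
  simp only [hlhs, hrhs, sub_self, zero_mul, Complex.ofReal_zero, mul_zero, add_zero, zero_pow hm,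
    zero_sub] at parts
  linear_combination parts

end Primitive

theorem Differentiable.integral_integral_pow_mul_comp_affine {f : ℂ → ℂ}
    (hf : Differentiable ℂ f) {m : ℕ} (hm : m ≠ 0) (kappa : ℝ) {lam mu : ℂ} (hne : lam ≠ mu)
    (xi : ℂ) :
    (∫ t in (0:ℝ)..kappa, ∫ s in (0:ℝ)..t,
        (t : ℂ) ^ (m - 1) * f (kappa * xi + (mu - xi) * t + (lam - mu) * s))
      = 1 / m * ((xi - lam) / (mu - lam)) *
          (∫ t in (0:ℝ)..kappa,
            ((kappa : ℂ) ^ m - (t : ℂ) ^ m) * f (kappa * xi + (lam - xi) * t))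
        + 1 / m * ((mu - xi) / (mu - lam)) *
          (∫ t in (0:ℝ)..kappa,
            ((kappa : ℂ) ^ m - (t : ℂ) ^ m) * f (kappa * xi + (mu - xi) * t)) := by
  obtain ⟨F, hF⟩ := hf.isExactOn_univ
  replace hF z : HasDerivAt F (f z) z := hF z (Set.mem_univ z)
  have hc : lam - mu ≠ 0 := sub_ne_zero.2 hne
  have hFc : Continuous F := continuous_iff_continuousAt.2 fun z => (hF z).continuousAt
  set b : ℂ := kappa * xi
  have inner (t : ℝ) : ∫ s in (0:ℝ)..t, (t : ℂ) ^ (m - 1) * f (b + (mu - xi) * t + (lam - mu) * s)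
      = ((t : ℂ) ^ (m - 1) * F (b + (lam - xi) * t) - (t : ℂ) ^ (m - 1) * F (b + (mu - xi) * t))
        / (lam - mu) := by
    have edge := integral_mul_comp_affine_eq_sub hF hf.continuous (b + (mu - xi) * t) (lam - mu) 0 t
    rw [intervalIntegral.integral_const_mul, Complex.ofReal_zero, mul_zero, add_zero,
      show b + (mu - xi) * t + (lam - mu) * t = b + (lam - xi) * t by ring] at edge
    rw [intervalIntegral.integral_const_mul, eq_div_iff hc]
    linear_combination (t : ℂ) ^ (m - 1) * edge
  simp only [inner, intervalIntegral.integral_div]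
  rw [intervalIntegral.integral_sub ((by fun_prop : Continuous _).intervalIntegrable _ _)
    ((by fun_prop : Continuous _).intervalIntegrable _ _)]
  have edge_lam := natCast_mul_integral_pow_mul_comp_affine hF hf.continuous hm kappa b (lam - xi)
  have edge_mu := natCast_mul_integral_pow_mul_comp_affine hF hf.continuous hm kappa b (mu - xi)
  field_simp
  linear_combination (mu - lam) * (edge_lam - edge_mu)

theorem double_integral_tm_decomposition_general (m : ℕ) (hm : 1 ≤ m) (kappa : ℝ)
    (lam xi mu : ℂ) (hne : lam ≠ mu)
    (h : Polynomial ℂ) :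
    (∫ t in (0:ℝ)..kappa, ∫ s in (0:ℝ)..t,
        ((t : ℂ)) ^ (m - 1) *
          h.eval ((kappa : ℂ) * xi + (mu - xi) * (t : ℂ) + (lam - mu) * (s : ℂ)))
      = (1 / (m : ℂ)) * ((xi - lam) / (mu - lam)) *
          (∫ t in (0:ℝ)..kappa,
            ((kappa : ℂ) ^ m - (t : ℂ) ^ m) * h.eval ((kappa : ℂ) * xi + (lam - xi) * (t : ℂ)))
        + (1 / (m : ℂ)) * ((mu - xi) / (mu - lam)) *
          (∫ t in (0:ℝ)..kappa,
            ((kappa : ℂ) ^ m - (t : ℂ) ^ m) * h.eval ((kappa : ℂ) * xi + (mu - xi) * (t : ℂ))) := by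
  exact h.differentiable.integral_integral_pow_mul_comp_affine (by omega) kappa hne xi

/-- Lemma 2.14 of the paper: for `m ≥ 1`, `κ ∈ (0,1]`, `λ ≠ μ` and a polynomial `h`,
`∫_0^κ ∫_0^t t^{m−1} h(κξ + (μ−ξ)t + (λ−μ)s) ds dt`
equals
`(1/m)((ξ−λ)/(μ−λ)) ∫_0^κ (κ^m − t^m) h(κξ + (λ−ξ)t) dt
 + (1/m)((μ−ξ)/(μ−λ)) ∫_0^κ (κ^m − t^m) h(κξ + (μ−ξ)t) dt`. -/
theorem double_integral_tm_decomposition (m : ℕ) (hm : 1 ≤ m) (kappa : ℝ)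
    (hk0 : 0 < kappa) (hk1 : kappa ≤ 1) (lam xi mu : ℂ) (hne : lam ≠ mu)
    (h : Polynomial ℂ) :
    (∫ t in (0:ℝ)..kappa, ∫ s in (0:ℝ)..t,
        ((t : ℂ)) ^ (m - 1) *
          h.eval ((kappa : ℂ) * xi + (mu - xi) * (t : ℂ) + (lam - mu) * (s : ℂ)))
      = (1 / (m : ℂ)) * ((xi - lam) / (mu - lam)) *
          (∫ t in (0:ℝ)..kappa,
            ((kappa : ℂ) ^ m - (t : ℂ) ^ m) * h.eval ((kappa : ℂ) * xi + (lam - xi) * (t : ℂ)))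
        + (1 / (m : ℂ)) * ((mu - xi) / (mu - lam)) *
          (∫ t in (0:ℝ)..kappa,
            ((kappa : ℂ) ^ m - (t : ℂ) ^ m) * h.eval ((kappa : ℂ) * xi + (mu - xi) * (t : ℂ))) :=
  double_integral_tm_decomposition_general m hm kappa lam xi mu hne h
end

section
/- Let k ≥ 1 be an integer, κ ∈ (0,1], λ, ξ, μ complex numbers with λ ≠ ξ, and h a polynomial. Then ∫_0^κ ∫_0^t s^{k−1} h(κξ + (λ−ξ)t + (μ−λ)s) ds dt = (1/k)((μ−λ)/(ξ−λ)) ∫_0^κ t^k h(κλ + (μ−λ)t) dt − (1/k)((μ−ξ)/(ξ−λ)) ∫_0^κ t^k h(κξ + (μ−ξ)t) dt. -/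
/-!
Swap the order of integration over the triangle `0 ≤ s ≤ t ≤ κ`. Since `h` is entire it has a
primitive `H`, so the inner `t`-integral is `(H(κλ + (μ-λ)s) - H(κξ + (μ-ξ)s)) / (λ-ξ)`.
Integrating each term against `s^{k-1}` by parts produces the two integrals of the claim; the
boundary terms at `s = κ` agree (both are `H(κμ)`) and cancel, and those at `s = 0` vanish.
-/

open MeasureTheory

theorem intervalIntegral_integral_triangle_swap {E : Type*} [NormedAddCommGroup E]
    [NormedSpace ℝ E] [CompleteSpace E] {f : ℝ → ℝ → E} (hf : Continuous (Function.uncurry f))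
    {κ : ℝ} (hκ : 0 ≤ κ) :
    ∫ t in (0:ℝ)..κ, ∫ s in (0:ℝ)..t, f t s = ∫ s in (0:ℝ)..κ, ∫ t in s..κ, f t s := by
  -- extending `f` by zero off the triangle turns both sides into integrals over the square
  set F : ℝ → ℝ → E := fun t s => if s < t then f t s else 0
  have hrow : ∀ t ∈ Set.uIcc 0 κ, ∫ s in (0:ℝ)..t, f t s = ∫ s in (0:ℝ)..κ, F t s := by
    intro t ht
    rw [Set.uIcc_of_le hκ] at ht
    have hset : Set.Iio t ∩ Set.Ioc 0 κ = Set.Ioo 0 t := by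
      ext x
      simp only [Set.mem_inter_iff, Set.mem_Iio, Set.mem_Ioc, Set.mem_Ioo]
      grind
    have hF : F t = (Set.Iio t).indicator (f t) := by
      funext s; simp only [F, Set.indicator_apply, Set.mem_Iio]
    rw [intervalIntegral.integral_of_le ht.1, intervalIntegral.integral_of_le hκ, hF,
      integral_indicator measurableSet_Iio, Measure.restrict_restrict measurableSet_Iio, hset,
      integral_Ioc_eq_integral_Ioo]
  have hcol : ∀ s ∈ Set.uIcc 0 κ, ∫ t in s..κ, f t s = ∫ t in (0:ℝ)..κ, F t s := by
    intro s hs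
    rw [Set.uIcc_of_le hκ] at hs
    have hF : (fun t => F t s) = (Set.Ioi s).indicator (fun t => f t s) := by
      funext t; simp only [F, Set.indicator_apply, Set.mem_Ioi]
    rw [intervalIntegral.integral_of_le hs.2, intervalIntegral.integral_of_le hκ, hF,
      integral_indicator measurableSet_Ioi, Measure.restrict_restrict measurableSet_Ioi,
      Set.inter_comm, Set.Ioc_inter_Ioi, max_eq_right hs.1]
  have hint : IntegrableOn (Function.uncurry F) (Set.uIoc 0 κ ×ˢ Set.uIoc 0 κ) := by
    have hF : Function.uncurry F = {p : ℝ × ℝ | p.2 < p.1}.indicator (Function.uncurry f) := by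
      funext p; simp only [F, Function.uncurry, Set.indicator_apply, Set.mem_ofPred_eq]
    rw [hF]
    refine IntegrableOn.indicator ?_ (measurableSet_lt measurable_snd measurable_fst)
    exact (hf.continuousOn.integrableOn_compact (isCompact_uIcc.prod isCompact_uIcc)).mono_set
      (Set.prod_mono Set.uIoc_subset_uIcc Set.uIoc_subset_uIcc)
  rw [intervalIntegral.integral_congr hrow, intervalIntegral.integral_congr hcol]
  exact intervalIntegral_intervalIntegral_swap hint

theorem HasDerivAt.comp_ofReal_affine {F : ℂ → ℂ} {F' a b : ℂ} {t : ℝ}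
    (hF : HasDerivAt F F' (a + b * t)) :
    HasDerivAt (fun t : ℝ => F (a + b * t)) (F' * b) t := by
  have hline : HasDerivAt (fun z : ℂ => a + b * z) b t := by
    simpa using ((hasDerivAt_id (t : ℂ)).const_mul b).const_add a
  exact (hF.comp (t : ℂ) hline).comp_ofReal

theorem intervalIntegral_comp_affine_of_hasDerivAt {f F : ℂ → ℂ}
    (hF : ∀ z, HasDerivAt F (f z) z) (hf : Continuous f) (a b : ℂ) (u v : ℝ) :
    ∫ t in u..v, f (a + b * t) * b = F (a + b * v) - F (a + b * u) :=
  intervalIntegral.integral_eq_sub_of_hasDerivAt (fun t _ => (hF _).comp_ofReal_affine)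
    ((by fun_prop : Continuous fun t : ℝ => f (a + b * t) * b).intervalIntegrable u v)

theorem intervalIntegral_pow_sub_one_mul_comp_affine {f F : ℂ → ℂ}
    (hF : ∀ z, HasDerivAt F (f z) z) (hf : Continuous f) (k : ℕ) (a c : ℂ) (u v : ℝ) :
    k * ∫ s in u..v, (s : ℂ) ^ (k - 1) * F (a + c * s)
      = (v : ℂ) ^ k * F (a + c * v) - (u : ℂ) ^ k * F (a + c * u)
        - c * ∫ s in u..v, (s : ℂ) ^ k * f (a + c * s) := by
  have hFc : Continuous F := continuous_iff_continuousAt.2 fun z => (hF z).continuousAt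
  have hparts := intervalIntegral.integral_deriv_mul_eq_sub
    (fun s _ => (hasDerivAt_pow k (s : ℂ)).comp_ofReal) (fun s _ => (hF _).comp_ofReal_affine)
    ((by fun_prop : Continuous fun s : ℝ => (k : ℂ) * (s : ℂ) ^ (k - 1)).intervalIntegrable u v)
    ((by fun_prop : Continuous fun s : ℝ => f (a + c * s) * c).intervalIntegrable u v)
  have hsplit : ∀ s : ℝ,
      (k : ℂ) * (s : ℂ) ^ (k - 1) * F (a + c * s) + (s : ℂ) ^ k * (f (a + c * s) * c)
        = k * ((s : ℂ) ^ (k - 1) * F (a + c * s)) + c * ((s : ℂ) ^ k * f (a + c * s)) :=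
    fun s => by ring
  simp only [hsplit] at hparts
  rw [intervalIntegral.integral_add ((by fun_prop : Continuous _).intervalIntegrable u v)
      ((by fun_prop : Continuous _).intervalIntegrable u v),
    intervalIntegral.integral_const_mul, intervalIntegral.integral_const_mul] at hparts
  linear_combination hparts

theorem intervalIntegral_triangle_pow_sub_one_mul_comp_affine {f : ℂ → ℂ}
    (hf : Differentiable ℂ f) {k : ℕ} (hk : k ≠ 0) {κ : ℝ} (hκ : 0 ≤ κ) (a b c : ℂ) :
    k * b * ∫ t in (0:ℝ)..κ, ∫ s in (0:ℝ)..t, (s : ℂ) ^ (k - 1) * f (a + b * t + c * s)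
      = (b + c) * (∫ s in (0:ℝ)..κ, (s : ℂ) ^ k * f (a + (b + c) * s))
        - c * ∫ s in (0:ℝ)..κ, (s : ℂ) ^ k * f (a + b * κ + c * s) := by
  obtain ⟨F, hF⟩ := hf.isExactOn_univ
  replace hF : ∀ z, HasDerivAt F (f z) z := fun z => hF z trivial
  have hcol : ∀ s : ℝ, b * ∫ t in s..κ, (s : ℂ) ^ (k - 1) * f (a + b * t + c * s)
      = (s : ℂ) ^ (k - 1) * F (a + b * κ + c * s) - (s : ℂ) ^ (k - 1) * F (a + (b + c) * s) := by
    intro s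
    calc b * ∫ t in s..κ, (s : ℂ) ^ (k - 1) * f (a + b * t + c * s)
        = (s : ℂ) ^ (k - 1) * ∫ t in s..κ, f (a + c * s + b * t) * b := by
          rw [← intervalIntegral.integral_const_mul, ← intervalIntegral.integral_const_mul]
          refine intervalIntegral.integral_congr fun t _ => ?_
          simp only [add_right_comm a]
          ring
      _ = _ := by
          rw [intervalIntegral_comp_affine_of_hasDerivAt hF hf.continuous]
          ring_nf
  have hcont : Continuous
      (Function.uncurry fun t s : ℝ => (s : ℂ) ^ (k - 1) * f (a + b * t + c * s)) := by
    have := hf.continuous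
    fun_prop
  have hcorner : a + b * κ + c * κ = a + (b + c) * κ := by ring
  calc k * b * ∫ t in (0:ℝ)..κ, ∫ s in (0:ℝ)..t, (s : ℂ) ^ (k - 1) * f (a + b * t + c * s)
      = k * ∫ s in (0:ℝ)..κ, b * ∫ t in s..κ, (s : ℂ) ^ (k - 1) * f (a + b * t + c * s) := by
        rw [intervalIntegral_integral_triangle_swap hcont hκ, intervalIntegral.integral_const_mul,
          mul_assoc]
    _ = k * (∫ s in (0:ℝ)..κ, (s : ℂ) ^ (k - 1) * F (a + b * κ + c * s))
          - k * ∫ s in (0:ℝ)..κ, (s : ℂ) ^ (k - 1) * F (a + (b + c) * s) := by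
        have hFc : Continuous F := continuous_iff_continuousAt.2 fun z => (hF z).continuousAt
        simp only [hcol]
        rw [intervalIntegral.integral_sub ((by fun_prop : Continuous _).intervalIntegrable _ _)
          ((by fun_prop : Continuous _).intervalIntegrable _ _), mul_sub]
    _ = _ := by
        rw [intervalIntegral_pow_sub_one_mul_comp_affine hF hf.continuous,
          intervalIntegral_pow_sub_one_mul_comp_affine hF hf.continuous, hcorner]
        simp only [Complex.ofReal_zero, zero_pow hk, zero_mul, sub_zero]
        ring

theorem double_integral_sk_decomposition_general (k : ℕ) (hk : 1 ≤ k) (kappa : ℝ)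
    (hk0 : 0 < kappa) (lam xi mu : ℂ) (hne : lam ≠ xi)
    (h : Polynomial ℂ) :
    (∫ t in (0:ℝ)..kappa, ∫ s in (0:ℝ)..t,
        ((s : ℂ)) ^ (k - 1) *
          h.eval ((kappa : ℂ) * xi + (lam - xi) * (t : ℂ) + (mu - lam) * (s : ℂ)))
      = (1 / (k : ℂ)) * ((mu - lam) / (xi - lam)) *
          (∫ t in (0:ℝ)..kappa,
            ((t : ℂ)) ^ k * h.eval ((kappa : ℂ) * lam + (mu - lam) * (t : ℂ)))
        - (1 / (k : ℂ)) * ((mu - xi) / (xi - lam)) *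
          (∫ t in (0:ℝ)..kappa,
            ((t : ℂ)) ^ k * h.eval ((kappa : ℂ) * xi + (mu - xi) * (t : ℂ))) := by
  have hk' : k ≠ 0 := by omega
  have hb : lam - xi ≠ 0 := sub_ne_zero.2 hne
  have key := intervalIntegral_triangle_pow_sub_one_mul_comp_affine h.differentiable hk' hk0.le
    ((kappa : ℂ) * xi) (lam - xi) (mu - lam)
  rw [show lam - xi + (mu - lam) = mu - xi by ring,
    show (kappa : ℂ) * xi + (lam - xi) * kappa = kappa * lam by ring] at key
  rw [← mul_right_inj' (mul_ne_zero (Nat.cast_ne_zero.2 hk') hb), key]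
  field_simp [sub_ne_zero.2 hne.symm]
  ring

/-- Lemma 2.15 of the paper: for `k ≥ 1`, `κ ∈ (0,1]`, `λ ≠ ξ` and a polynomial `h`,
`∫_0^κ ∫_0^t s^{k−1} h(κξ + (λ−ξ)t + (μ−λ)s) ds dt`
equals
`(1/k)((μ−λ)/(ξ−λ)) ∫_0^κ t^k h(κλ + (μ−λ)t) dt
 − (1/k)((μ−ξ)/(ξ−λ)) ∫_0^κ t^k h(κξ + (μ−ξ)t) dt`. -/
theorem double_integral_sk_decomposition (k : ℕ) (hk : 1 ≤ k) (kappa : ℝ)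
    (hk0 : 0 < kappa) (hk1 : kappa ≤ 1) (lam xi mu : ℂ) (hne : lam ≠ xi)
    (h : Polynomial ℂ) :
    (∫ t in (0:ℝ)..kappa, ∫ s in (0:ℝ)..t,
        ((s : ℂ)) ^ (k - 1) *
          h.eval ((kappa : ℂ) * xi + (lam - xi) * (t : ℂ) + (mu - lam) * (s : ℂ)))
      = (1 / (k : ℂ)) * ((mu - lam) / (xi - lam)) *
          (∫ t in (0:ℝ)..kappa,
            ((t : ℂ)) ^ k * h.eval ((kappa : ℂ) * lam + (mu - lam) * (t : ℂ)))
        - (1 / (k : ℂ)) * ((mu - xi) / (xi - lam)) *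
          (∫ t in (0:ℝ)..kappa,
            ((t : ℂ)) ^ k * h.eval ((kappa : ℂ) * xi + (mu - xi) * (t : ℂ))) :=
  double_integral_sk_decomposition_general k hk kappa hk0 lam xi mu hne h
end
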